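/- Define R(ε) = ∫₀^{1/2} log(1 + (2πε·x(1−x))²) dx for ε > 0. Then there exist constants C > 0 and ε₀ ≥ 2 such that for all ε ≥ ε₀, | R(ε) − ( log(2πε) − 2 + 1/(2ε) ) | ≤ C·(log ε)/ε². -/

import Mathlib

open Real intervalIntegral MeasureTheory Set


lemma arctan_le_self' {t : ℝ} (ht : 0 ≤ t) : Real.arctan t ≤ t := by
  have h0 : 0 ≤ Real.arctan t := by
    rw [← Real.arctan_zero]; exact Real.arctan_strictMono.monotone ht
  calc Real.arctan t ≤ Real.tan (Real.arctan t) :=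
        Real.le_tan h0 (Real.arctan_lt_pi_div_two t)
    _ = t := Real.tan_arctan t

lemma II_log01 : IntervalIntegrable Real.log volume 0 (1/2) := by
  have h : IntervalIntegrable (fun x : ℝ => -Real.log x) volume 0 (1/2) := by
    apply intervalIntegral.intervalIntegrable_deriv_of_nonneg
      (g := fun x : ℝ => x - x * Real.log x)
    · exact (continuous_id.sub Real.continuous_mul_log).continuousOn
    · intro x hx
      rw [min_eq_left (by norm_num : (0:ℝ) ≤ 1/2), max_eq_right (by norm_num : (0:ℝ) ≤ 1/2)] at hx
      have := (hasDerivAt_id x).sub (Real.hasDerivAt_mul_log hx.1.ne')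
      exact this.congr_deriv (by ring)
    · intro x hx
      rw [min_eq_left (by norm_num : (0:ℝ) ≤ 1/2), max_eq_right (by norm_num : (0:ℝ) ≤ 1/2)] at hx
      simp only [neg_nonneg]
      exact Real.log_nonpos hx.1.le (by linarith [hx.2])
  have h2 := h.neg
  have : (-fun x : ℝ => -Real.log x) = Real.log := by funext x; simp
  rwa [this] at h2

lemma int_log01 : ∫ x in (0:ℝ)..(1/2), Real.log x = (1/2) * Real.log (1/2) - 1/2 := by
  have := intervalIntegral.integral_eq_sub_of_hasDeriv_right_of_le (f := fun x : ℝ => x * Real.log x - x)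
    (f' := Real.log) (by norm_num : (0:ℝ) ≤ 1/2)
    ((Real.continuous_mul_log.sub continuous_id).continuousOn)
    (fun x hx => by
      have := (Real.hasDerivAt_mul_log hx.1.ne').sub (hasDerivAt_id x)
      have h2 : Real.log x + 1 - 1 = Real.log x := by ring
      rw [h2] at this
      exact this.hasDerivWithinAt)
    II_log01
  simpa using this

lemma int_log_one_sub : ∫ x in (0:ℝ)..(1/2), Real.log (1-x) = -((1/2) * Real.log (1/2)) - 1/2 := by
  have hc : ContinuousOn (fun x : ℝ => Real.log (1 - x)) (Set.Icc 0 (1/2)) := by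
    apply ContinuousOn.log
    · fun_prop
    · intro x hx; simp only [Set.mem_Icc] at hx; intro h; linarith [hx.2]
  have hInt : IntervalIntegrable (fun x : ℝ => Real.log (1-x)) volume 0 (1/2) := by
    apply ContinuousOn.intervalIntegrable
    rwa [Set.uIcc_of_le (by norm_num : (0:ℝ) ≤ 1/2)]
  have := intervalIntegral.integral_eq_sub_of_hasDeriv_right_of_le
    (f := fun x : ℝ => -((1-x) * Real.log (1-x)) - x)
    (f' := fun x : ℝ => Real.log (1-x)) (by norm_num : (0:ℝ) ≤ 1/2)
    (by
      apply ContinuousOn.sub _ continuousOn_id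
      apply ContinuousOn.neg
      exact (Real.continuous_mul_log.comp (continuous_const.sub continuous_id)).continuousOn)
    (fun x hx => by
      have h1 : (1:ℝ) - x ≠ 0 := by intro h; simp only [Set.mem_Ioo] at hx; linarith [hx.2]
      have h0 : HasDerivAt (fun y : ℝ => 1 - y) (-1) x := by
        simpa using (hasDerivAt_id x).const_sub 1
      have := ((Real.hasDerivAt_mul_log h1).comp x h0).neg.sub (hasDerivAt_id x)
      have h2 : -((Real.log (1 - x) + 1) * -1) - 1 = Real.log (1-x) := by ring
      rw [h2] at this
      exact this.hasDerivWithinAt)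
    hInt
  rw [this]; norm_num


lemma log_split {c x : ℝ} (hc : 0 < c) (hx : 0 < x) :
    Real.log (1 + ((c*x)^2)⁻¹) = Real.log (c^2*x^2+1) - 2*Real.log c - 2*Real.log x := by
  have h : 1 + ((c*x)^2)⁻¹ = (c^2*x^2+1)/((c*x)^2) := by
    field_simp
  rw [h, Real.log_div (by positivity) (by positivity), Real.log_pow,
    Real.log_mul hc.ne' hx.ne']
  push_cast; ring

lemma II_gc {c : ℝ} (hc : 0 < c) :
    IntervalIntegrable (fun x : ℝ => Real.log (1+((c*x)^2)⁻¹)) volume 0 (1/2) := by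
  have h1 : IntervalIntegrable
      (fun x : ℝ => Real.log (c^2*x^2+1) - 2*Real.log c - 2*Real.log x) volume 0 (1/2) := by
    apply IntervalIntegrable.sub
    apply IntervalIntegrable.sub
    · apply Continuous.intervalIntegrable
      exact (Continuous.log (by continuity) (fun x => by positivity))
    · exact intervalIntegrable_const
    · exact II_log01.const_mul 2
  rw [intervalIntegrable_iff_integrableOn_Ioc_of_le (by norm_num)] at h1 ⊢
  exact IntegrableOn.congr_fun h1 (fun x hx => (log_split hc hx.1).symm) measurableSet_Ioc

lemma int_gc {c : ℝ} (hc : 0 < c) :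
    ∫ x in (0:ℝ)..(1/2), Real.log (1+((c*x)^2)⁻¹)
      = (1/2)*Real.log (c^2/4+1) - Real.log c + Real.log 2 + (2/c)*Real.arctan (c/2) := by
  have key := intervalIntegral.integral_eq_sub_of_hasDeriv_right_of_le
    (f := fun x : ℝ => x * Real.log (c^2*x^2+1) - 2*Real.log c * x - 2*(x*Real.log x)
      + (2/c)*Real.arctan (c*x))
    (f' := fun x : ℝ => Real.log (1+((c*x)^2)⁻¹))
    (by norm_num : (0:ℝ) ≤ 1/2)
    (by
      apply ContinuousOn.add
      apply ContinuousOn.sub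
      apply ContinuousOn.sub
      · exact (continuous_id.mul (Continuous.log (by continuity)
          (fun x => by positivity))).continuousOn
      · exact (continuous_const.mul continuous_id).continuousOn
      · exact (continuous_const.mul Real.continuous_mul_log).continuousOn
      · exact (continuous_const.mul
          (Real.continuous_arctan.comp (continuous_const.mul continuous_id))).continuousOn)
    (fun x hx => by
      have hx0 : 0 < x := hx.1
      have hne : c^2*x^2+1 ≠ 0 := by positivity
      have hpoly : HasDerivAt (fun y : ℝ => c^2*y^2+1) (c^2*(2*x)) x := by
        have := ((hasDerivAt_pow 2 x).const_mul (c^2)).add_const 1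
        simpa using this
      have hlog1 := hpoly.log hne
      have ht1 := (hasDerivAt_id x).mul hlog1
      have ht2 : HasDerivAt (fun y : ℝ => 2*Real.log c * y) (2*Real.log c) x := by
        simpa using (hasDerivAt_id x).const_mul (2*Real.log c)
      have ht3 := (Real.hasDerivAt_mul_log hx0.ne').const_mul (2:ℝ)
      have ha : HasDerivAt (fun y : ℝ => c*y) c x := by
        simpa using (hasDerivAt_id x).const_mul c
      have ht4 := ((Real.hasDerivAt_arctan (c*x)).comp x ha).const_mul ((2:ℝ)/c)
      have ht := ((ht1.sub ht2).sub ht3).add ht4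
      have heq : Real.log (1+((c*x)^2)⁻¹)
          = 1 * Real.log (c^2*x^2+1) + x * (c^2*(2*x)/(c^2*x^2+1)) - 2*Real.log c
            - 2*(Real.log x + 1) + 2/c * (1/(1+(c*x)^2) * c) := by
        rw [log_split hc hx0]
        have h2 : 1+(c*x)^2 ≠ 0 := by positivity
        field_simp
        ring
      simp only [id_eq, Function.comp_def] at ht
      rw [← heq] at ht
      exact ht.hasDerivWithinAt)
    (II_gc hc)
  rw [key]
  have hx2 : c^2*(1/2:ℝ)^2+1 = c^2/4+1 := by ring
  have hc2 : c * (1/2:ℝ) = c/2 := by ring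
  have hl : Real.log (1/2 : ℝ) = -Real.log 2 := by
    rw [one_div, Real.log_inv]
  simp only [hx2, hc2, hl, mul_zero, zero_mul, Real.arctan_zero, Real.log_zero,
    ne_eq, OfNat.ofNat_ne_zero, not_false_eq_true, zero_pow, add_zero, Real.log_one,
    sub_zero, zero_sub]
  ring


lemma pointwise_ineq {c x : ℝ} (hc : 0 < c) (hx0 : 0 < x) (hx2 : x ≤ 1/2) :
    Real.log (1+((c*x)^2)⁻¹) ≤ Real.log (1+((c*x*(1-x))^2)⁻¹) ∧
    Real.log (1+((c*x*(1-x))^2)⁻¹) - Real.log (1+((c*x)^2)⁻¹) ≤ 8*x/(1+c^2*x^2) := by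
  have h1x : 0 < 1 - x := by linarith
  have ha : 0 < c*x*(1-x) := by positivity
  have hb : 0 < c*x := by positivity
  have hab : c*x*(1-x) ≤ c*x := by nlinarith
  have hsq : (c*x*(1-x))^2 ≤ (c*x)^2 := by
    apply pow_le_pow_left₀ ha.le hab
  have hinv : ((c*x)^2)⁻¹ ≤ ((c*x*(1-x))^2)⁻¹ := inv_anti₀ (by positivity) hsq
  have hX : 0 < 1 + ((c*x*(1-x))^2)⁻¹ := by positivity
  have hY : 0 < 1 + ((c*x)^2)⁻¹ := by positivity
  constructor
  · exact (Real.log_le_log_iff hY hX).mpr (by linarith)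
  · rw [← Real.log_div hX.ne' hY.ne']
    refine (Real.log_le_sub_one_of_pos (div_pos hX hY)).trans ?_
    have e1 : (1 + ((c*x*(1-x))^2)⁻¹)/(1 + ((c*x)^2)⁻¹) - 1
        = ((c*x)^2 - (c*x*(1-x))^2)/((c*x*(1-x))^2*((c*x)^2+1)) := by
      field_simp
      ring
    rw [e1, div_le_div_iff₀ (by positivity) (by positivity)]
    have h8 : 0 ≤ 8*(1-x)^2 - (2-x) := by nlinarith
    have hpos : 0 ≤ c^2*x^3*(1+c^2*x^2) := by positivity
    nlinarith [mul_nonneg h8 hpos]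


lemma II_log_one_sub : IntervalIntegrable (fun x : ℝ => Real.log (1-x)) volume 0 (1/2) := by
  apply ContinuousOn.intervalIntegrable
  rw [Set.uIcc_of_le (by norm_num : (0:ℝ) ≤ 1/2)]
  apply ContinuousOn.log
  · fun_prop
  · intro x hx; simp only [Set.mem_Icc] at hx; intro h; linarith [hx.2]

lemma cont_bound {c : ℝ} : Continuous (fun x : ℝ => 8*x/(1+c^2*x^2)) := by
  apply Continuous.div (by continuity) (by continuity)
  intro x; positivity

lemma int_bound {c : ℝ} (hc : 0 < c) :
    ∫ x in (0:ℝ)..(1/2), 8*x/(1+c^2*x^2) = (4/c^2)*Real.log (c^2/4+1) := by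
  have key := intervalIntegral.integral_eq_sub_of_hasDerivAt
    (f := fun x : ℝ => (4/c^2) * Real.log (1+c^2*x^2))
    (f' := fun x : ℝ => 8*x/(1+c^2*x^2)) (a := 0) (b := 1/2)
    (fun x _ => by
      have hne : 1+c^2*x^2 ≠ 0 := by positivity
      have hpoly : HasDerivAt (fun y : ℝ => 1+c^2*y^2) (c^2*(2*x)) x := by
        have := ((hasDerivAt_pow 2 x).const_mul (c^2)).const_add 1
        simpa using this
      have := (hpoly.log hne).const_mul ((4:ℝ)/c^2)
      refine this.congr_deriv ?_
      field_simp
      ring)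
    (cont_bound.intervalIntegrable 0 (1/2))
  rw [key]
  show 4/c^2*Real.log (1+c^2*(1/2)^2) - 4/c^2*Real.log (1+c^2*0^2) = 4/c^2*Real.log (c^2/4+1)
  rw [show (1:ℝ)+c^2*(1/2)^2 = c^2/4+1 from by ring, show (1:ℝ)+c^2*0^2 = 1 from by ring,
    Real.log_one]
  ring

lemma log_one_add_sq_split {u : ℝ} (hu : 0 < u) :
    Real.log (1+u^2) = 2*Real.log u + Real.log (1+(u^2)⁻¹) := by
  have h : 1 + (u^2)⁻¹ = (1+u^2)/u^2 := by field_simp; ring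
  rw [h, Real.log_div (by positivity) (by positivity), Real.log_pow]
  push_cast; ring

lemma main_est {c : ℝ} (hc : 1 ≤ c) :
    |(∫ x in (0:ℝ)..(1/2), Real.log (1+(c*x*(1-x))^2)) - (Real.log c - 2 + Real.pi/c)|
      ≤ (4/c^2)*Real.log (c^2/4+1) + 4/c^2 := by
  have hc0 : 0 < c := by linarith
  -- integrability
  have hFi : IntervalIntegrable (fun x : ℝ => Real.log (1+(c*x*(1-x))^2)) volume 0 (1/2) := by
    apply Continuous.intervalIntegrable
    exact Continuous.log (by continuity) (fun x => by positivity)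
  have hL1 : IntervalIntegrable (fun x : ℝ => 2*Real.log x) volume 0 (1/2) := II_log01.const_mul 2
  have hL2 : IntervalIntegrable (fun x : ℝ => 2*Real.log (1-x)) volume 0 (1/2) :=
    II_log_one_sub.const_mul 2
  have hLi : IntervalIntegrable
      (fun x : ℝ => 2*Real.log c + 2*Real.log x + 2*Real.log (1-x)) volume 0 (1/2) :=
    (intervalIntegrable_const.add hL1).add hL2
  -- splitting on Ioc
  have hEq : ∀ x ∈ Set.Ioc (0:ℝ) (1/2),
      Real.log (1+((c*x*(1-x))^2)⁻¹)
        = Real.log (1+(c*x*(1-x))^2)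
          - (2*Real.log c + 2*Real.log x + 2*Real.log (1-x)) := by
    intro x hx
    have hx0 : 0 < x := hx.1
    have h1x : 0 < 1 - x := by
      have := hx.2; linarith
    have hu : 0 < c*x*(1-x) := by positivity
    have hsplit := log_one_add_sq_split hu
    have hlu : Real.log (c*x*(1-x)) = Real.log c + Real.log x + Real.log (1-x) := by
      rw [Real.log_mul (by positivity) h1x.ne', Real.log_mul hc0.ne' hx0.ne']
    rw [hsplit, hlu]; ring
  have hGi : IntervalIntegrable (fun x : ℝ => Real.log (1+((c*x*(1-x))^2)⁻¹)) volume 0 (1/2) := by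
    rw [intervalIntegrable_iff_integrableOn_Ioc_of_le (by norm_num)]
    have h1 := hFi.sub hLi
    rw [intervalIntegrable_iff_integrableOn_Ioc_of_le (by norm_num)] at h1
    exact IntegrableOn.congr_fun h1 (fun x hx => (hEq x hx).symm) measurableSet_Ioc
  -- the decomposition of the integral
  have hIeq : ∫ x in (0:ℝ)..(1/2), Real.log (1+((c*x*(1-x))^2)⁻¹)
      = (∫ x in (0:ℝ)..(1/2), Real.log (1+(c*x*(1-x))^2))
        - ∫ x in (0:ℝ)..(1/2), (2*Real.log c + 2*Real.log x + 2*Real.log (1-x)) := by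
    rw [← intervalIntegral.integral_sub hFi hLi]
    rw [intervalIntegral.integral_of_le (by norm_num : (0:ℝ) ≤ 1/2),
        intervalIntegral.integral_of_le (by norm_num : (0:ℝ) ≤ 1/2)]
    exact MeasureTheory.setIntegral_congr_fun measurableSet_Ioc hEq
  -- value of the L integral
  have hLval : ∫ x in (0:ℝ)..(1/2), (2*Real.log c + 2*Real.log x + 2*Real.log (1-x))
      = Real.log c - 2 := by
    rw [intervalIntegral.integral_add (intervalIntegrable_const.add hL1) hL2,
        intervalIntegral.integral_add intervalIntegrable_const hL1,
        intervalIntegral.integral_const,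
        intervalIntegral.integral_const_mul, intervalIntegral.integral_const_mul,
        int_log01, int_log_one_sub]
    simp
    ring
  -- comparison with the gc integral
  have hmono1 : (∫ x in (0:ℝ)..(1/2), Real.log (1+((c*x)^2)⁻¹))
      ≤ ∫ x in (0:ℝ)..(1/2), Real.log (1+((c*x*(1-x))^2)⁻¹) := by
    apply intervalIntegral.integral_mono_on (by norm_num) (II_gc hc0) hGi
    intro x hx
    rcases eq_or_lt_of_le hx.1 with h0 | h0
    · rw [← h0]; norm_num
    · exact (pointwise_ineq hc0 h0 hx.2).1
  have hmono2 : (∫ x in (0:ℝ)..(1/2),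
        (Real.log (1+((c*x*(1-x))^2)⁻¹) - Real.log (1+((c*x)^2)⁻¹)))
      ≤ ∫ x in (0:ℝ)..(1/2), 8*x/(1+c^2*x^2) := by
    apply intervalIntegral.integral_mono_on (by norm_num) (hGi.sub (II_gc hc0))
      (cont_bound.intervalIntegrable 0 (1/2))
    intro x hx
    rcases eq_or_lt_of_le hx.1 with h0 | h0
    · rw [← h0]; try norm_num
    · exact (pointwise_ineq hc0 h0 hx.2).2
  have i2 : (∫ x in (0:ℝ)..(1/2), Real.log (1+((c*x*(1-x))^2)⁻¹))
      - (∫ x in (0:ℝ)..(1/2), Real.log (1+((c*x)^2)⁻¹)) ≤ (4/c^2)*Real.log (c^2/4+1) := by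
    rw [← intervalIntegral.integral_sub hGi (II_gc hc0), ← int_bound hc0]
    exact hmono2
  -- bounds on J - pi/c
  have hc2 : (0:ℝ) < c^2 := by positivity
  have hp_eq : (1/2)*Real.log (c^2/4+1) - Real.log c + Real.log 2
      = (1/2)*Real.log (1+4/c^2) := by
    have h1 : Real.log (1+4/c^2) = Real.log (c^2/4+1) - Real.log (c^2/4) := by
      rw [← Real.log_div (by positivity) (by positivity)]
      congr 1
      field_simp
    have h2 : Real.log (c^2/4) = 2*Real.log c - 2*Real.log 2 := by
      rw [Real.log_div (by positivity) (by norm_num), Real.log_pow,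
        show (4:ℝ) = 2^2 by norm_num, Real.log_pow]
      push_cast; ring
    rw [h1, h2]; ring
  have hp1 : 0 ≤ Real.log (1+4/c^2) := by
    apply Real.log_nonneg
    have : 0 ≤ 4/c^2 := by positivity
    linarith
  have hp2 : Real.log (1+4/c^2) ≤ 4/c^2 := by
    have := Real.log_le_sub_one_of_pos (show (0:ℝ) < 1+4/c^2 by positivity)
    linarith
  have harct : Real.arctan (c/2) = Real.pi/2 - Real.arctan (2/c) := by
    have := Real.arctan_inv_of_pos (show (0:ℝ) < c/2 by positivity)
    rw [inv_div] at this
    linarith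
  have h2c : (0:ℝ) ≤ 2/c := by positivity
  have hq1 : 0 ≤ Real.arctan (2/c) := by
    rw [← Real.arctan_zero]
    exact Real.arctan_strictMono.monotone (by positivity)
  have hq2 : Real.arctan (2/c) ≤ 2/c := arctan_le_self' (by positivity)
  have hq3 : (2/c)*Real.arctan (2/c) ≤ 4/c^2 := by
    calc (2/c)*Real.arctan (2/c) ≤ (2/c)*(2/c) := mul_le_mul_of_nonneg_left hq2 h2c
      _ = 4/c^2 := by ring
  have hq4 : 0 ≤ (2/c)*Real.arctan (2/c) := mul_nonneg h2c hq1
  have hJform : ((1/2)*Real.log (c^2/4+1) - Real.log c + Real.log 2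
        + (2/c)*Real.arctan (c/2)) - Real.pi/c
      = (1/2)*Real.log (1+4/c^2) - (2/c)*Real.arctan (2/c) := by
    rw [harct, hp_eq]
    ring
  have h24 : (2:ℝ)/c^2 ≤ 4/c^2 := by gcongr <;> norm_num
  have hlognn : 0 ≤ Real.log (c^2/4+1) := by
    apply Real.log_nonneg
    nlinarith
  -- final assembly
  rw [abs_le]
  have e2 := int_gc hc0
  constructor
  · have low : ((1/2)*Real.log (c^2/4+1) - Real.log c + Real.log 2
        + (2/c)*Real.arctan (c/2)) - Real.pi/c ≥ -(4/c^2) := by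
      rw [hJform]; linarith
    linarith [hmono1, hIeq, hLval, e2, low]
  · have high : ((1/2)*Real.log (c^2/4+1) - Real.log c + Real.log 2
        + (2/c)*Real.arctan (c/2)) - Real.pi/c ≤ 4/c^2 := by
      rw [hJform]; linarith
    linarith [i2, hIeq, hLval, e2, high]


/-- The random Lyapunov exponent `R(ε) = ∫₀^{1/2} log(1 + (2πε x(1-x))²) dx` of the
`SO(3)`-randomized twist family. -/
noncomputable def randExp (ε : ℝ) : ℝ :=
  ∫ x in (0:ℝ)..(1/2), Real.log (1 + (2 * Real.pi * ε * x * (1 - x)) ^ 2)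

/-- As `ε → ∞`, `R(ε) = log(2πε) − 2 + 1/(2ε) + O((log ε)/ε²)`. -/
theorem randExp_asymptotic_large :
    ∃ C > (0:ℝ), ∃ ε₀ : ℝ, 2 ≤ ε₀ ∧ ∀ ε : ℝ, ε₀ ≤ ε →
      |randExp ε - (Real.log (2 * Real.pi * ε) - 2 + 1 / (2 * ε))| ≤
        C * Real.log ε / ε ^ 2 := by
  refine ⟨9, by norm_num, 2, le_refl 2, ?_⟩
  intro ε hε
  have hε0 : (0:ℝ) < ε := by linarith
  have hπ := Real.pi_gt_three
  have hπ4 := Real.pi_lt_four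
  have hc1 : (1:ℝ) ≤ 2*Real.pi*ε := by nlinarith
  have h := main_est hc1
  have hdiv : Real.pi/(2*Real.pi*ε) = 1/(2*ε) := by
    rw [div_eq_div_iff (by positivity) (by positivity)]; ring
  rw [hdiv] at h
  have hre : randExp ε
      = ∫ x in (0:ℝ)..(1/2), Real.log (1+(2*Real.pi*ε*x*(1-x))^2) := rfl
  rw [hre]
  refine h.trans ?_
  have hε2 : (0:ℝ) < ε^2 := by positivity
  have hc2 : (2*Real.pi*ε)^2 = 4*(Real.pi^2*ε^2) := by ring
  have hπ2u : Real.pi^2 ≤ 16 := by nlinarith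
  have hπ2l : (9:ℝ) ≤ Real.pi^2 := by nlinarith
  have hLε : Real.log 2 ≤ Real.log ε :=
    (Real.log_le_log_iff (by norm_num) hε0).mpr hε
  have hL9 : (1/9:ℝ) ≤ Real.log ε := by linarith [Real.log_two_gt_d9]
  have ht2 : 4/(2*Real.pi*ε)^2 ≤ 1/(9*ε^2) := by
    rw [hc2, div_le_div_iff₀ (by positivity) (by positivity)]
    nlinarith
  have hlog7 : Real.log ((2*Real.pi*ε)^2/4+1) ≤ 7*Real.log ε := by
    have h1 : (2*Real.pi*ε)^2/4+1 = Real.pi^2*ε^2+1 := by ring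
    have h25 : (32:ℝ) ≤ ε^5 := by
      calc (32:ℝ) = 2^5 := by norm_num
        _ ≤ ε^5 := pow_le_pow_left₀ (by norm_num) hε 5
    have h2 : Real.pi^2*ε^2+1 ≤ ε^7 := by
      nlinarith [mul_le_mul_of_nonneg_right h25 hε2.le, sq_nonneg (ε-2)]
    rw [h1]
    calc Real.log (Real.pi^2*ε^2+1) ≤ Real.log (ε^7) :=
          (Real.log_le_log_iff (by positivity) (by positivity)).mpr h2
      _ = 7*Real.log ε := by rw [Real.log_pow]; push_cast; ring
  have hlognn : 0 ≤ Real.log ((2*Real.pi*ε)^2/4+1) := by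
    apply Real.log_nonneg
    nlinarith [sq_nonneg (2*Real.pi*ε)]
  have tA : (4/(2*Real.pi*ε)^2)*Real.log ((2*Real.pi*ε)^2/4+1)
      ≤ (1/(9*ε^2))*(7*Real.log ε) :=
    mul_le_mul ht2 hlog7 hlognn (by positivity)
  have final : (1/(9*ε^2))*(7*Real.log ε) + 1/(9*ε^2) ≤ 9*Real.log ε/ε^2 := by
    rw [show (1/(9*ε^2))*(7*Real.log ε) + 1/(9*ε^2)
        = (7*Real.log ε+1)/(9*ε^2) from by ring,
      div_le_div_iff₀ (by positivity) hε2]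
    nlinarith [mul_nonneg hε2.le (show (0:ℝ) ≤ 74*Real.log ε - 1 by linarith)]
  linarith [tA, ht2, final]
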